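/- arXiv:1705.07021 — 6 statements merged into one kernel-verified Lean document; each statement's English description precedes it below -/
import Mathlib

section
/- Every homeomorphism U : X_η → X_η satisfying U ∘ S = S ∘ U is equal to the restriction of some power of the shift, i.e. there exists n ∈ ℤ such that U(y) = S^n(y) for all y ∈ X_η. In other words, the automorphism group of the B-free subshift (X_η, S) is trivial. -/
open scoped BigOperators

-- The (Boolean) indicator function of the `\mathscr{B}`-free integers for
--`\mathscr{B} = {2^i b_i : i \ge 1}`. 
open Classical in
noncomputable def etaB (b : ℕ → ℕ) : ℤ → Bool := fun n =>
  if (∀ i : ℕ, 1 ≤ i → ¬ ((2 : ℤ) ^ i * (b i : ℤ) ∣ n)) then true else false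

-- The orbit closure `X_η` of `η` under the left shift, in the product topology
--on `{0,1}^ℤ`. 
def Xeta (b : ℕ → ℕ) : Set (ℤ → Bool) :=
  closure {y : ℤ → Bool | ∃ n : ℤ, y = fun m => etaB b (m + n)}

/-
At each level `i` every point `y ∈ X_η` vanishes on a residue class `c_i(y)` mod
`M_i = 2^i b_i`, and a fixed finite window already determines that class: every other class
contains, inside the window, a `1` of every shift of `η` (a CRT choice over the moduli
`2, b_1, …, b_{i-1}`). Since `U` is continuous and commutes with `S`, it adds the classes of
`Uη` to those of `y`: `c_i(Uy) = c_i(y) + c_i(Uη)`.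
Two points of `X_η` with equal classes can only differ at positions `m` with
`m ≡ c_i mod 2^i` for all `i`, and there is at most one such integer. Taking for `y` two points
of `X_η` that differ only at `0` (with freely prescribed classes mod `b_j`) yields first an
integer `d` with `d ≡ c_i(Uη) mod 2^i` for all `i`, and then, by a second choice of classes,
`d ≡ c_i(Uη) mod b_i` as well. Hence `Uη` has the classes of `S^{-d}η`, so `Uη = S^{-d}η`,
and `U = S^{-d}` on the dense orbit of `η`.
-/

open Filter Topology Set Function

theorem Int.exists_nonneg_lt_prod_forall_dvd_sub {ι : Type*} (s : Finset ι) (m : ι → ℕ)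
    (r : ι → ℤ) (hm : ∀ i ∈ s, m i ≠ 0) (hco : (s : Set ι).Pairwise (Nat.Coprime on m)) :
    ∃ t : ℤ, 0 ≤ t ∧ t < ∏ i ∈ s, (m i : ℤ) ∧ ∀ i ∈ s, (m i : ℤ) ∣ t - r i := by
  let k := Nat.chineseRemainderOfFinset (fun i => (r i % m i).toNat) m s hm hco
  refine ⟨k, by positivity, by exact_mod_cast Nat.chineseRemainderOfFinset_lt_prod _ _ hm hco,
    fun i hi => ?_⟩
  have hk : (k : ℤ) ≡ r i % m i [ZMOD m i] := by
    rw [← Int.toNat_of_nonneg (Int.emod_nonneg _ (by exact_mod_cast hm i hi))]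
    exact Int.natCast_modEq_iff.2 (k.2 i hi)
  exact (hk.trans (Int.mod_modEq _ _)).symm.dvd

theorem Int.eq_zero_of_forall_two_pow_dvd {d : ℤ} (h : ∀ i, 1 ≤ i → (2 : ℤ) ^ i ∣ d) :
    d = 0 := by
  refine Int.eq_zero_of_abs_lt_dvd (h (d.natAbs + 1) (by omega)) ?_
  have : d.natAbs < 2 ^ (d.natAbs + 1) := Nat.lt_two_pow_self.trans (Nat.pow_lt_pow_succ one_lt_two)
  rw [Int.abs_eq_natAbs]
  exact_mod_cast this

-- `t ≡ [q ∣ e]` moves `e` off `q ℤ` if it lies on it and keeps it off otherwise.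
theorem not_dvd_add_mul_of_dvd_sub_mul {q e M t : ℤ} (hM : ¬ q ∣ M)
    (ht : q ∣ (t - if q ∣ e then 1 else 0) * M) : ¬ q ∣ e + t * M := by
  intro h
  split_ifs at ht with he
  · exact hM (by rw [show M = e + t * M - e - (t - 1) * M by ring]; exact (h.sub he).sub ht)
  · exact he (by rw [show e = e + t * M - (t - 0) * M by ring]; exact h.sub ht)

theorem mem_closure_iff_forall_finite_eqOn {ι α : Type*} [TopologicalSpace α]
    [DiscreteTopology α] {s : Set (ι → α)} {y : ι → α} :
    y ∈ closure s ↔ ∀ F : Set ι, F.Finite → ∃ z ∈ s, EqOn z y F := by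
  rw [mem_closure_iff_nhds_basis (by simpa [nhds_pi, nhds_discrete] using hasBasis_pi_pure y)]
  rfl

theorem Continuous.eventually_eqOn {X ι α : Type*} [TopologicalSpace X] [TopologicalSpace α]
    [DiscreteTopology α] {f : X → ι → α} (hf : Continuous f) (x : X) {F : Set ι}
    (hF : F.Finite) : ∀ᶠ x' in 𝓝 x, EqOn (f x') (f x) F :=
  (hF.eventually_all).2 fun m _ =>
    ((continuous_apply m).comp hf).continuousAt.eventually_mem
      ((isOpen_discrete {f x m}).mem_nhds rfl)

namespace BFree

def shift {α : Type*} (n : ℤ) (y : ℤ → α) : ℤ → α := fun m => y (m + n)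

theorem shift_add {α : Type*} (m n : ℤ) (y : ℤ → α) : shift (m + n) y = shift m (shift n y) := by
  funext k; simp only [shift, add_assoc]

theorem shift_zero {α : Type*} (y : ℤ → α) : shift 0 y = y := by
  funext k; simp [shift]

theorem continuous_shift {α : Type*} [TopologicalSpace α] (n : ℤ) :
    Continuous (shift (α := α) n) :=
  continuous_pi fun m => continuous_apply (m + n)

variable {b : ℕ → ℕ}

noncomputable def orbitPt (b : ℕ → ℕ) (n : ℤ) : Xeta b :=
  ⟨shift n (etaB b), subset_closure ⟨n, rfl⟩⟩

theorem denseRange_orbitPt : DenseRange (orbitPt b) := by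
  intro y
  rw [closure_subtype, ← range_comp]
  convert y.2 using 1
  unfold Xeta
  congr 1
  ext z
  exact exists_congr fun n => eq_comm

theorem exists_eqOn_shift_etaB {y : ℤ → Bool} (hy : y ∈ Xeta b) {F : Set ℤ} (hF : F.Finite) :
    ∃ n, EqOn y (shift n (etaB b)) F := by
  obtain ⟨_, ⟨n, rfl⟩, hn⟩ := mem_closure_iff_forall_finite_eqOn.1 hy F hF
  exact ⟨n, hn.symm⟩

def CommutesWithShift (U : Xeta b → Xeta b) : Prop :=
  ∀ y z : Xeta b, (z : ℤ → Bool) = shift 1 y → (U z : ℤ → Bool) = shift 1 (U y)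

namespace CommutesWithShift

variable {U : Xeta b → Xeta b}

theorem apply_orbitPt (hU : CommutesWithShift U) (n : ℤ) :
    (U (orbitPt b n) : ℤ → Bool) = shift n (U (orbitPt b 0)) := by
  induction n using Int.induction_on with
  | zero => rw [shift_zero]
  | succ k ih =>
    rw [hU (orbitPt b k) _ (by simp only [orbitPt, ← shift_add, add_comm]), ih, ← shift_add,
      add_comm]
  | pred k ih =>
    have h := hU (orbitPt b (-k - 1)) (orbitPt b (-k))
      (by simp only [orbitPt, ← shift_add]; ring_nf)
    rw [ih] at h
    rw [← shift_zero (U _ : ℤ → Bool), show (0 : ℤ) = -1 + 1 by norm_num, shift_add, ← h,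
      ← shift_add]
    ring_nf

theorem eq_shift (hU : CommutesWithShift U) (hcont : Continuous U) {k : ℤ}
    (h0 : (U (orbitPt b 0) : ℤ → Bool) = shift k (etaB b)) (y : Xeta b) :
    (U y : ℤ → Bool) = shift k y := by
  refine congrFun (denseRange_orbitPt.equalizer (continuous_subtype_val.comp hcont)
    ((continuous_shift k).comp continuous_subtype_val) (funext fun n => ?_)) y
  change (U (orbitPt b n) : ℤ → Bool) = shift k (shift n (etaB b))
  rw [hU.apply_orbitPt, h0, ← shift_add, ← shift_add, add_comm]

end CommutesWithShift

def modulus (b : ℕ → ℕ) (i : ℕ) : ℤ := 2 ^ i * b i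

theorem etaB_eq_true_iff {n : ℤ} : etaB b n = true ↔ ∀ i, 1 ≤ i → ¬ modulus b i ∣ n := by
  simp [etaB, modulus]

def Vanishes (y : ℤ → Bool) (M c : ℤ) : Prop := ∀ m, M ∣ m - c → y m = false

section Vanishes

variable {y : ℤ → Bool} {M c : ℤ}

theorem Vanishes.congr (h : Vanishes y M c) {c' : ℤ} (hc : M ∣ c' - c) : Vanishes y M c' :=
  fun m hm => h m (by simpa using dvd_add hm hc)

theorem Vanishes.shift (h : Vanishes y M c) (n : ℤ) : Vanishes (shift n y) M (c - n) :=
  fun m hm => h (m + n) (by rwa [show m + n - c = m - (c - n) by ring])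

theorem isClosed_setOf_vanishes : IsClosed {y : ℤ → Bool | Vanishes y M c} := by
  simp only [Vanishes, ofPred_forall]
  refine isClosed_iInter fun m => ?_
  by_cases hm : M ∣ m - c
  · simpa [hm] using isClosed_eq (continuous_apply m) continuous_const
  · simp [hm]

end Vanishes

theorem vanishes_shift_etaB {i : ℕ} (hi : 1 ≤ i) (n : ℤ) :
    Vanishes (shift n (etaB b)) (modulus b i) (-n) := by
  intro m hm
  by_contra h
  exact etaB_eq_true_iff.1 (by simpa [shift] using h) i hi (by simpa using hm)

theorem exists_vanishes {i : ℕ} (hb : b i ≠ 0) (hi : 1 ≤ i) {y : ℤ → Bool} (hy : y ∈ Xeta b) :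
    ∃ c, Vanishes y (modulus b i) c := by
  have hM : 0 < modulus b i := by unfold modulus; positivity
  have hsub : Xeta b ⊆ ⋃ c ∈ Ico 0 (modulus b i), {y | Vanishes y (modulus b i) c} := by
    refine closure_minimal ?_ ((finite_Ico _ _).isClosed_biUnion fun c _ => isClosed_setOf_vanishes)
    rintro _ ⟨n, rfl⟩
    exact mem_biUnion ⟨Int.emod_nonneg _ hM.ne', Int.emod_lt_of_pos _ hM⟩
      ((vanishes_shift_etaB hi n).congr Int.dvd_emod_sub_self)
  obtain ⟨c, -, hc⟩ := mem_iUnion₂.1 (hsub hy)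
  exact ⟨c, hc⟩

theorem exists_forall_vanishes (hb : ∀ i, 1 ≤ i → b i ≠ 0) {y : ℤ → Bool} (hy : y ∈ Xeta b) :
    ∃ c : ℕ → ℤ, ∀ i, 1 ≤ i → Vanishes y (modulus b i) (c i) := by
  choose! c hc using fun i (hi : 1 ≤ i) => exists_vanishes (hb i hi) hi hy
  exact ⟨c, hc⟩

structure PairwiseCoprimeOdd (b : ℕ → ℕ) : Prop where
  odd : ∀ i, 1 ≤ i → Odd (b i)
  one_lt : ∀ i, 1 ≤ i → 1 < b i
  coprime : ∀ i j, 1 ≤ i → 1 ≤ j → i ≠ j → Nat.Coprime (b i) (b j)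

-- `update b 0 2` is `b` with `b 0` replaced by `2`, so the product is `2 * b 1 * ⋯ * b (i-1)`.
def window (b : ℕ → ℕ) (i : ℕ) : Set ℤ :=
  Ico 0 (modulus b i * ∏ j ∈ Finset.range i, (update b 0 2 j : ℤ))

theorem finite_window (i : ℕ) : (window b i).Finite := finite_Ico _ _

open Classical in
noncomputable def freeIndicator (b : ℕ → ℕ) (γ : ℕ → ℤ) : ℤ → Bool :=
  fun m => decide (∀ j, 1 ≤ j → ¬ modulus b j ∣ m - γ j)

theorem vanishes_update_freeIndicator {γ : ℕ → ℤ} {j : ℕ} (hj : 1 ≤ j)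
    (hγb : ¬ (b j : ℤ) ∣ γ j) (ε : Bool) :
    Vanishes (update (freeIndicator b γ) 0 ε) (modulus b j) (γ j) := by
  intro m hm
  have hm0 : m ≠ 0 := by
    rintro rfl
    exact hγb (by simpa using (dvd_mul_left _ _).trans hm)
  rw [update_of_ne hm0, freeIndicator, decide_eq_false_iff_not]
  exact fun h => h j hj hm

namespace PairwiseCoprimeOdd

variable (hb : PairwiseCoprimeOdd b) {i j : ℕ}
include hb

theorem isCoprime_two_pow (hj : 1 ≤ j) (k : ℕ) : IsCoprime ((2 : ℤ) ^ k) (b j) :=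
  (Nat.isCoprime_iff_coprime.2 ((hb.odd j hj).coprime_two_left)).pow_left

theorem modulus_dvd_iff (hj : 1 ≤ j) {x : ℤ} :
    modulus b j ∣ x ↔ 2 ^ j ∣ x ∧ (b j : ℤ) ∣ x :=
  ⟨fun h => ⟨(dvd_mul_right _ _).trans h, (dvd_mul_left _ _).trans h⟩,
    fun h => (hb.isCoprime_two_pow hj j).mul_dvd h.1 h.2⟩

theorem not_dvd_of_isCoprime (hj : 1 ≤ j) {x : ℤ} (h : IsCoprime (b j : ℤ) x) :
    ¬ (b j : ℤ) ∣ x := fun hx => by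
  have := Int.isUnit_iff.1 (h.isUnit_of_dvd' dvd_rfl hx)
  have := hb.one_lt j hj
  omega

theorem not_dvd_two_pow (hj : 1 ≤ j) (k : ℕ) : ¬ (b j : ℤ) ∣ 2 ^ k :=
  hb.not_dvd_of_isCoprime hj (hb.isCoprime_two_pow hj k).symm

theorem not_dvd_modulus (hi : 1 ≤ i) (hj : 1 ≤ j) (hij : i ≠ j) : ¬ (b j : ℤ) ∣ modulus b i :=
  hb.not_dvd_of_isCoprime hj ((hb.isCoprime_two_pow hj i).symm.mul_right
    (Nat.isCoprime_iff_coprime.2 (hb.coprime j i hj hi hij.symm)))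

theorem not_two_pow_succ_dvd_modulus (hi : 1 ≤ i) : ¬ (2 : ℤ) ^ (i + 1) ∣ modulus b i := by
  rw [modulus, pow_succ, mul_dvd_mul_iff_left (by positivity)]
  exact fun h => (Int.not_even_iff_odd.2 (by exact_mod_cast hb.odd i hi)) (even_iff_two_dvd.2 h)

theorem coprime_update_zero (k : ℕ) {j j' : ℕ} (hjj' : j ≠ j') :
    Nat.Coprime (update b 0 (2 ^ k) j) (update b 0 (2 ^ k) j') := by
  rcases Nat.eq_zero_or_pos j with rfl | hj <;> rcases Nat.eq_zero_or_pos j' with rfl | hj'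
  · exact absurd rfl hjj'
  · simpa [update_of_ne hj'.ne'] using (hb.odd j' hj').coprime_two_left.pow_left k
  · simpa [update_of_ne hj.ne'] using ((hb.odd j hj).coprime_two_left.pow_left k).symm
  · simpa [update_of_ne hj.ne', update_of_ne hj'.ne'] using hb.coprime j j' hj hj' hjj'

theorem update_zero_ne_zero (k j : ℕ) : update b 0 (2 ^ k) j ≠ 0 := by
  rcases Nat.eq_zero_or_pos j with rfl | hj
  · simp
  · simpa [update_of_ne hj.ne'] using (hb.odd j hj).pos.ne'

theorem exists_not_modulus_dvd_add_mul (hi : 1 ≤ i) {e : ℤ} (he : ¬ modulus b i ∣ e) :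
    ∃ t, 0 ≤ t ∧ t < ∏ j ∈ Finset.range i, (update b 0 2 j : ℤ) ∧
      ∀ j, 1 ≤ j → ¬ modulus b j ∣ e + t * modulus b i := by
  obtain ⟨t, ht0, htK, ht⟩ := Int.exists_nonneg_lt_prod_forall_dvd_sub (Finset.range i)
    (update b 0 2) (fun j => if j = 0 then (if 2 ^ (i + 1) ∣ e then 1 else 0)
      else if (b j : ℤ) ∣ e then 1 else 0)
    (fun j _ => by simpa using hb.update_zero_ne_zero 1 j)
    (fun j _ j' _ h => by simpa using hb.coprime_update_zero 1 h)
  refine ⟨t, ht0, htK, fun j hj hdvd => ?_⟩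
  rcases lt_trichotomy j i with hji | rfl | hji
  · have htj : (b j : ℤ) ∣ t - if (b j : ℤ) ∣ e then 1 else 0 := by
      simpa [update_of_ne (show j ≠ 0 by omega), show j ≠ 0 by omega] using
        ht j (Finset.mem_range.2 hji)
    exact not_dvd_add_mul_of_dvd_sub_mul (hb.not_dvd_modulus hi hj hji.ne')
      (htj.mul_right _) ((dvd_mul_left _ _).trans hdvd)
  · exact he (by simpa using dvd_sub hdvd (dvd_mul_left (modulus b j) t))
  · obtain ⟨u, hu⟩ : (2 : ℤ) ∣ t - if 2 ^ (i + 1) ∣ e then 1 else 0 := by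
      simpa using ht 0 (Finset.mem_range.2 hi)
    refine not_dvd_add_mul_of_dvd_sub_mul (hb.not_two_pow_succ_dvd_modulus hi)
      ⟨u * b i, by rw [hu, modulus]; ring⟩ ?_
    exact (pow_dvd_pow 2 hji).trans ((dvd_mul_right _ _).trans hdvd)

theorem modulus_pos (hi : 1 ≤ i) : 0 < modulus b i := by
  have := (hb.odd i hi).pos
  unfold modulus
  positivity

theorem exists_mem_window (hi : 1 ≤ i) {c n : ℤ} (h : ¬ modulus b i ∣ c + n) :
    ∃ m ∈ window b i, modulus b i ∣ m - c ∧ shift n (etaB b) m = true := by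
  set M := modulus b i
  have hM := hb.modulus_pos hi
  obtain ⟨t, ht0, htK, ht⟩ := hb.exists_not_modulus_dvd_add_mul hi (e := c % M + n) fun h' =>
    h (by rw [show c + n = c % M + n + (c - c % M) by ring]; exact h'.add Int.dvd_self_sub_emod)
  have hc0 := Int.emod_nonneg c hM.ne'
  have hcM := Int.emod_lt_of_pos c hM
  refine ⟨c % M + t * M, ⟨by positivity, by nlinarith⟩, ?_, ?_⟩
  · rw [show c % M + t * M - c = c % M - c + t * M by ring]
    exact Int.dvd_emod_sub_self.add (dvd_mul_left _ _)
  · rw [shift, etaB_eq_true_iff, show c % M + t * M + n = c % M + n + t * M by ring]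
    exact ht

theorem modulus_dvd_of_eqOn_window (hi : 1 ≤ i) {y : ℤ → Bool} {c n : ℤ}
    (hyn : EqOn y (shift n (etaB b)) (window b i))
    (hc : ∀ m ∈ window b i, modulus b i ∣ m - c → y m = false) : modulus b i ∣ c + n := by
  by_contra h
  obtain ⟨m, hmW, hmc, hm⟩ := hb.exists_mem_window hi h
  simp [← hyn hmW, hc m hmW hmc] at hm

theorem vanishes_of_window (hi : 1 ≤ i) {y : ℤ → Bool} (hy : y ∈ Xeta b) {c : ℤ}
    (hc : ∀ m ∈ window b i, modulus b i ∣ m - c → y m = false) :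
    Vanishes y (modulus b i) c := by
  obtain ⟨c', hc'⟩ := exists_vanishes (hb.odd i hi).pos.ne' hi hy
  obtain ⟨n, hn⟩ := exists_eqOn_shift_etaB hy (finite_window i)
  have h := (hb.modulus_dvd_of_eqOn_window hi hn hc).sub
    (hb.modulus_dvd_of_eqOn_window hi hn fun m _ => hc' m)
  exact hc'.congr (by simpa using h)

theorem apply_eq_true {y : ℤ → Bool} (hy : y ∈ Xeta b) {c : ℕ → ℤ}
    (hc : ∀ j, 1 ≤ j → Vanishes y (modulus b j) (c j)) {m : ℤ}
    (hm : ∀ j, 1 ≤ j → ¬ modulus b j ∣ m - c j) (hi : 1 ≤ i) (h2 : ¬ 2 ^ i ∣ m - c i) :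
    y m = true := by
  have hF : (insert m (⋃ j ∈ Icc 1 i, window b j)).Finite :=
    ((finite_Icc 1 i).biUnion fun j _ => finite_window j).insert m
  obtain ⟨n, hn⟩ := exists_eqOn_shift_etaB hy hF
  have hcn : ∀ j, 1 ≤ j → j ≤ i → modulus b j ∣ c j + n := fun j hj hji =>
    hb.modulus_dvd_of_eqOn_window hj (hn.mono ((subset_biUnion_of_mem (u := window b)
      (show j ∈ Icc 1 i from ⟨hj, hji⟩)).trans (subset_insert _ _))) fun m' _ => hc j hj m'
  rw [hn (mem_insert m _), shift, etaB_eq_true_iff]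
  intro j hj hdvd
  rcases le_or_gt j i with hji | hji
  · exact hm j hj (by simpa using hdvd.sub (hcn j hj hji))
  · have h2j : (2 : ℤ) ^ i ∣ m + n := (pow_dvd_pow 2 hji.le).trans ((dvd_mul_right _ _).trans hdvd)
    exact h2 (by simpa using h2j.sub ((dvd_mul_right _ _).trans (hcn i hi le_rfl)))

theorem two_pow_dvd_of_apply_ne {y y' : ℤ → Bool} (hy : y ∈ Xeta b) (hy' : y' ∈ Xeta b)
    {c : ℕ → ℤ} (hc : ∀ j, 1 ≤ j → Vanishes y (modulus b j) (c j))
    (hc' : ∀ j, 1 ≤ j → Vanishes y' (modulus b j) (c j)) {m : ℤ} (hm : y m ≠ y' m) :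
    (∀ i, 1 ≤ i → 2 ^ i ∣ m - c i) ∧ ∀ j, 1 ≤ j → ¬ modulus b j ∣ m - c j := by
  have hfree : ∀ j, 1 ≤ j → ¬ modulus b j ∣ m - c j := fun j hj hd =>
    hm ((hc j hj m hd).trans (hc' j hj m hd).symm)
  refine ⟨fun i hi => by_contra fun h2 => hm ?_, hfree⟩
  rw [hb.apply_eq_true hy hc hfree hi h2, hb.apply_eq_true hy' hc' hfree hi h2]

theorem eq_shift_etaB {y : ℤ → Bool} (hy : y ∈ Xeta b) {d : ℤ}
    (hd : ∀ j, 1 ≤ j → Vanishes y (modulus b j) d) : y = shift (-d) (etaB b) := by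
  funext m
  by_contra hm
  obtain ⟨h2, hfree⟩ := hb.two_pow_dvd_of_apply_ne hy (orbitPt b (-d)).2 (c := fun _ => d) hd
    (fun j hj => by simpa [orbitPt] using vanishes_shift_etaB hj (-d)) hm
  exact hfree 1 le_rfl (by rw [Int.eq_zero_of_forall_two_pow_dvd h2]; exact dvd_zero _)

-- CRT modulo `2 ^ (N + 1), b 1, …, b (N + 1)`; `b (N + 1)` only serves to make `etaB b t = false`.
theorem exists_etaB_eq {γ : ℕ → ℤ} (hγb : ∀ j, 1 ≤ j → ¬ (b j : ℤ) ∣ γ j) (N : ℕ) (ε : Bool) :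
    ∃ t, 2 ^ N ∣ t ∧ (∀ j, 1 ≤ j → j ≤ N → (b j : ℤ) ∣ t + γ j) ∧ etaB b t = ε := by
  obtain ⟨t, -, -, ht⟩ := Int.exists_nonneg_lt_prod_forall_dvd_sub (Finset.range (N + 2))
    (update b 0 (2 ^ (N + 1)))
    (fun j => if j = 0 then (if ε then 2 ^ N else 0) else if j ≤ N then -γ j else 0)
    (fun j _ => hb.update_zero_ne_zero _ j) (fun j _ j' _ h => hb.coprime_update_zero _ h)
  have h0 : (2 : ℤ) ^ (N + 1) ∣ t - if ε then 2 ^ N else 0 := by simpa using ht 0 (by simp)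
  have hbj : ∀ j, 1 ≤ j → j ≤ N + 1 → (b j : ℤ) ∣ t - if j ≤ N then -γ j else 0 :=
    fun j hj hjN => by
      simpa [update_of_ne (show j ≠ 0 by omega), show j ≠ 0 by omega] using
        ht j (Finset.mem_range.2 (by omega))
  have h2N : (2 : ℤ) ^ N ∣ t := by
    have := (pow_dvd_pow 2 N.le_succ).trans h0
    cases ε
    · simpa using this
    · simpa using this.add (dvd_refl _)
  refine ⟨t, h2N, fun j hj hjN => by simpa [hjN] using hbj j hj (by omega), ?_⟩
  cases ε
  · refine Bool.eq_false_iff.2 fun h => etaB_eq_true_iff.1 h (N + 1) (by omega) ?_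
    exact (hb.modulus_dvd_iff (by omega)).2
      ⟨by simpa using h0, by simpa using hbj (N + 1) (by omega) le_rfl⟩
  · rw [etaB_eq_true_iff]
    intro j hj hdvd
    rcases le_or_gt j N with hjN | hjN
    · have hγ : (b j : ℤ) ∣ t + γ j := by simpa [hjN] using hbj j hj (by omega)
      exact hγb j hj ((dvd_add_right ((dvd_mul_left _ _).trans hdvd)).1 hγ)
    · have : (2 : ℤ) ^ (N + 1) ∣ 2 ^ N := by
        simpa using ((pow_dvd_pow 2 hjN).trans ((dvd_mul_right _ _).trans hdvd)).sub h0
      have := (Nat.pow_dvd_pow_iff_le_right one_lt_two).1 (by exact_mod_cast this)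
      omega

theorem etaB_add_eq_freeIndicator {γ : ℕ → ℤ} (hγ2 : ∀ j, 1 ≤ j → 2 ^ j ∣ γ j) {N : ℕ} {t : ℤ}
    (ht2 : 2 ^ N ∣ t) (htb : ∀ j, 1 ≤ j → j ≤ N → (b j : ℤ) ∣ t + γ j) {m : ℤ}
    (hm : ¬ 2 ^ N ∣ m) : etaB b (m + t) = freeIndicator b γ m := by
  classical
  rw [Bool.eq_iff_iff, etaB_eq_true_iff, freeIndicator, decide_eq_true_iff]
  refine forall₂_congr fun j hj => not_congr ?_
  rcases le_or_gt j N with hjN | hjN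
  · rw [show m + t = m - γ j + (t + γ j) by ring]
    exact dvd_add_left ((hb.modulus_dvd_iff hj).2
      ⟨((pow_dvd_pow 2 hjN).trans ht2).add (hγ2 j hj), htb j hj hjN⟩)
  · have h2N : ∀ x, modulus b j ∣ x → 2 ^ N ∣ x := fun x hx =>
      (pow_dvd_pow 2 hjN.le).trans ((dvd_mul_right _ _).trans hx)
    exact iff_of_false (fun h => hm (by simpa using (h2N _ h).sub ht2))
      (fun h => hm (by simpa using (h2N _ h).add ((pow_dvd_pow 2 hjN.le).trans (hγ2 j hj))))

theorem update_freeIndicator_mem {γ : ℕ → ℤ} (hγ2 : ∀ j, 1 ≤ j → 2 ^ j ∣ γ j)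
    (hγb : ∀ j, 1 ≤ j → ¬ (b j : ℤ) ∣ γ j) (ε : Bool) :
    update (freeIndicator b γ) 0 ε ∈ Xeta b := by
  refine mem_closure_iff_forall_finite_eqOn.2 fun F hF => ?_
  obtain ⟨N, hN⟩ := (hF.image Int.natAbs).bddAbove
  obtain ⟨t, ht2, htb, ht0⟩ := hb.exists_etaB_eq hγb N ε
  refine ⟨fun m => etaB b (m + t), ⟨t, rfl⟩, fun m hm => ?_⟩
  rcases eq_or_ne m 0 with rfl | hm0
  · simpa using ht0
  rw [update_of_ne hm0]
  refine hb.etaB_add_eq_freeIndicator hγ2 ht2 htb fun h => hm0 (Int.eq_zero_of_abs_lt_dvd h ?_)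
  rw [Int.abs_eq_natAbs]
  exact_mod_cast (hN (mem_image_of_mem _ hm)).trans_lt Nat.lt_two_pow_self

theorem vanishes_apply {U : Xeta b → Xeta b} (hU : CommutesWithShift U) (hcont : Continuous U)
    (hi : 1 ≤ i) {c₀ : ℤ} (h0 : Vanishes (U (orbitPt b 0)) (modulus b i) c₀)
    {y : Xeta b} {c : ℤ} (hy : Vanishes y (modulus b i) c) :
    Vanishes (U y) (modulus b i) (c + c₀) := by
  have hW := finite_window (b := b) i
  obtain ⟨n, hny, hnU⟩ := denseRange_orbitPt.mem_nhds
    ((continuous_subtype_val.eventually_eqOn y hW).and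
      ((continuous_subtype_val.comp hcont).eventually_eqOn y hW))
  have hcn : modulus b i ∣ c + n := hb.modulus_dvd_of_eqOn_window hi hny.symm fun m _ => hy m
  refine hb.vanishes_of_window hi (U y).2 fun m hm hmc => ?_
  rw [show (U y : ℤ → Bool) m = _ from (hnU hm).symm, Function.comp_apply, hU.apply_orbitPt]
  exact h0.shift n m (by rw [show m - (c₀ - n) = m - (c + c₀) + (c + n) by ring]; exact hmc.add hcn)

theorem exists_two_pow_dvd_sub {U : Xeta b → Xeta b} (hU : CommutesWithShift U)
    (hcont : Continuous U) (hinj : Injective U) {c : ℕ → ℤ}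
    (hc : ∀ i, 1 ≤ i → Vanishes (U (orbitPt b 0)) (modulus b i) (c i)) {γ : ℕ → ℤ}
    (hγ2 : ∀ j, 1 ≤ j → 2 ^ j ∣ γ j) (hγb : ∀ j, 1 ≤ j → ¬ (b j : ℤ) ∣ γ j) :
    ∃ d, (∀ i, 1 ≤ i → 2 ^ i ∣ d - c i) ∧ ∀ j, 1 ≤ j → ¬ modulus b j ∣ d - (γ j + c j) := by
  let y (ε : Bool) : Xeta b :=
    ⟨update (freeIndicator b γ) 0 ε, hb.update_freeIndicator_mem hγ2 hγb ε⟩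
  have hne : U (y false) ≠ U (y true) := hinj.ne fun h => by
    simpa [y] using congrArg (fun z : Xeta b => (z : ℤ → Bool) 0) h
  obtain ⟨d, hd⟩ : ∃ d, (U (y false) : ℤ → Bool) d ≠ (U (y true) : ℤ → Bool) d := by
    by_contra! h
    exact hne (Subtype.ext (funext h))
  have hv (ε : Bool) (j : ℕ) (hj : 1 ≤ j) : Vanishes (U (y ε)) (modulus b j) (γ j + c j) :=
    hb.vanishes_apply hU hcont hj (hc j hj) (vanishes_update_freeIndicator hj (hγb j hj) ε)
  obtain ⟨h2, hfree⟩ :=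
    hb.two_pow_dvd_of_apply_ne (U (y false)).2 (U (y true)).2 (hv false) (hv true) hd
  refine ⟨d, fun i hi => ?_, hfree⟩
  rw [show d - c i = d - (γ i + c i) + γ i by ring]
  exact (h2 i hi).add (hγ2 i hi)

end PairwiseCoprimeOdd

end BFree

theorem automorphism_group_trivial (b : ℕ → ℕ)
    (hodd : ∀ i : ℕ, 1 ≤ i → Odd (b i))
    (hgt : ∀ i : ℕ, 1 ≤ i → 1 < b i)
    (hcop : ∀ i j : ℕ, 1 ≤ i → 1 ≤ j → i ≠ j → Nat.Coprime (b i) (b j))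
    (U : ↥(Xeta b) ≃ₜ ↥(Xeta b))
    (hcomm : ∀ y z : ↥(Xeta b),
      (z : ℤ → Bool) = (fun m => (y : ℤ → Bool) (m + 1)) →
        ((U z : ℤ → Bool)) = fun m => (U y : ℤ → Bool) (m + 1)) :
    ∃ n : ℤ, ∀ y : ↥(Xeta b), (U y : ℤ → Bool) = fun m => (y : ℤ → Bool) (m + n) := by
  have hb : BFree.PairwiseCoprimeOdd b := ⟨hodd, hgt, hcop⟩
  have hU : BFree.CommutesWithShift U := hcomm
  obtain ⟨cU, hcU⟩ :=
    BFree.exists_forall_vanishes (fun i hi => (hodd i hi).pos.ne') (U (BFree.orbitPt b 0)).2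
  obtain ⟨d, hd2, -⟩ := hb.exists_two_pow_dvd_sub hU U.continuous U.injective hcU
    (γ := fun j => 2 ^ j) (fun j _ => dvd_rfl) (fun j hj => hb.not_dvd_two_pow hj j)
  have hdb : ∀ j, 1 ≤ j → (b j : ℤ) ∣ d - cU j := by
    intro j hj
    by_contra hj'
    obtain ⟨d', hd'2, hd'free⟩ := hb.exists_two_pow_dvd_sub hU U.continuous U.injective hcU
      (γ := fun j => if (b j : ℤ) ∣ d - cU j then 2 ^ j else d - cU j)
      (fun j hj => by split_ifs; exacts [dvd_rfl, hd2 j hj])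
      (fun j hj => by split_ifs with h; exacts [hb.not_dvd_two_pow hj j, h])
    have hd'd : d' = d := sub_eq_zero.1 (Int.eq_zero_of_forall_two_pow_dvd fun i hi => by
      simpa using (hd'2 i hi).sub (hd2 i hi))
    -- with `γ j = d - cU j`, the point `d` itself would lie in the class of level `j`
    exact hd'free j hj (by simp [hj', hd'd])
  have hU0 := hb.eq_shift_etaB (U (BFree.orbitPt b 0)).2 fun j hj =>
    (hcU j hj).congr ((hb.modulus_dvd_iff hj).2 ⟨hd2 j hj, hdb j hj⟩)
  exact ⟨-d, hU.eq_shift U.continuous hU0⟩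
end

section
/- The sequence η is a Toeplitz sequence: for every n ∈ ℤ there is a positive integer s with n ∈ Per_s(η). -/
/-!
If `n` is divisible by some `2^i b_i`, then so is every `n + k 2^i b_i`, and `η` vanishes on that
progression. Otherwise `n ≠ 0`; put `t = |n|` and `s = 2^t b_1 ⋯ b_t`. For `i ≤ t` the modulus
`2^i b_i` divides `s`, so it divides `n + k s` exactly when it divides `n`; for `i > t` a divisor
`2^i b_i` of `n + k s` would make `2^t` divide `n`, impossible as `0 < |n| < 2^t`.
-/

open scoped BigOperators

-- The indicator function of the `\mathscr{B}`-free integers for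
--`\mathscr{B} = {2^i b_i : i \ge 1}`. 
open Classical in
noncomputable def eta (b : ℕ → ℕ) : ℤ → ℕ := fun n =>
  if (∀ i : ℕ, 1 ≤ i → ¬ ((2 : ℤ) ^ i * (b i : ℤ) ∣ n)) then 1 else 0

-- `Per x s` is the set of `s`-periodic positions of `x`. 
def Per (x : ℤ → ℕ) (s : ℕ) : Set ℤ := {n : ℤ | ∀ k : ℤ, x (n + k * s) = x n}

-- `pp b t = 2^t * b_1 * b_2 * \cdots * b_t`. 
def pp (b : ℕ → ℕ) (t : ℕ) : ℕ := 2 ^ t * ∏ i ∈ Finset.Icc 1 t, b i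

section

variable {b : ℕ → ℕ}

lemma eta_eq_one {n : ℤ} (h : ∀ i : ℕ, 1 ≤ i → ¬ ((2 : ℤ) ^ i * (b i : ℤ) ∣ n)) :
    eta b n = 1 :=
  if_pos h

lemma eta_eq_zero {n : ℤ} {i : ℕ} (hi : 1 ≤ i) (h : (2 : ℤ) ^ i * (b i : ℤ) ∣ n) :
    eta b n = 0 :=
  if_neg fun hfree => hfree i hi h

lemma pow_mul_dvd_pp {i t : ℕ} (hi : 1 ≤ i) (hit : i ≤ t) : 2 ^ i * b i ∣ pp b t :=
  mul_dvd_mul (pow_dvd_pow 2 hit) (Finset.dvd_prod_of_mem b (Finset.mem_Icc.mpr ⟨hi, hit⟩))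

lemma two_pow_dvd_pp (t : ℕ) : 2 ^ t ∣ pp b t :=
  dvd_mul_right _ _

lemma pp_pos (hb : ∀ i : ℕ, 1 ≤ i → 0 < b i) (t : ℕ) : 0 < pp b t :=
  Nat.mul_pos (Nat.two_pow_pos t)
    (Finset.prod_pos fun i hi => hb i (Finset.mem_Icc.mp hi).1)

lemma mem_Per_eta_of_dvd {n : ℤ} {i : ℕ} (hi : 1 ≤ i) (h : (2 : ℤ) ^ i * (b i : ℤ) ∣ n) :
    n ∈ Per (eta b) (2 ^ i * b i) := by
  intro k
  rw [eta_eq_zero hi h, eta_eq_zero hi]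
  push_cast
  exact dvd_add h (dvd_mul_left _ _)

lemma not_dvd_add_mul_pp {n : ℤ} (hfree : ∀ i : ℕ, 1 ≤ i → ¬ ((2 : ℤ) ^ i * (b i : ℤ) ∣ n))
    (k : ℤ) {i : ℕ} (hi : 1 ≤ i) :
    ¬ ((2 : ℤ) ^ i * (b i : ℤ) ∣ n + k * (pp b n.natAbs : ℤ)) := by
  set t := n.natAbs
  intro hdvd
  rcases le_or_gt i t with hit | hti
  · have hs : (2 : ℤ) ^ i * (b i : ℤ) ∣ pp b t := by exact_mod_cast pow_mul_dvd_pp hi hit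
    exact hfree i hi ((dvd_add_left (hs.mul_left k)).mp hdvd)
  · have hn : n ≠ 0 := by
      rintro rfl
      exact hfree 1 le_rfl (dvd_zero _)
    have hs : (2 : ℤ) ^ t ∣ pp b t := by exact_mod_cast two_pow_dvd_pp (b := b) t
    have h2t : (2 : ℤ) ^ t ∣ n + k * (pp b t : ℤ) :=
      (pow_dvd_pow 2 hti.le).trans ((dvd_mul_right _ _).trans hdvd)
    replace h2t : (2 : ℤ) ^ t ∣ n := (dvd_add_left (hs.mul_left k)).mp h2t
    refine hn (Int.eq_zero_of_dvd_of_natAbs_lt_natAbs h2t ?_)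
    simpa [Int.natAbs_pow] using Nat.lt_two_pow_self

lemma mem_Per_eta_pp {n : ℤ} (hfree : ∀ i : ℕ, 1 ≤ i → ¬ ((2 : ℤ) ^ i * (b i : ℤ) ∣ n)) :
    n ∈ Per (eta b) (pp b n.natAbs) := fun k =>
  (eta_eq_one fun _ hi => not_dvd_add_mul_pp hfree k hi).trans (eta_eq_one hfree).symm

end

theorem eta_isToeplitz_general (b : ℕ → ℕ)
    (hgt : ∀ i : ℕ, 1 ≤ i → 1 < b i) :
    ∀ n : ℤ, ∃ s : ℕ, 0 < s ∧ n ∈ Per (eta b) s := by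
  intro n
  have hb : ∀ i : ℕ, 1 ≤ i → 0 < b i := fun i hi => zero_lt_one.trans (hgt i hi)
  by_cases hfree : ∀ i : ℕ, 1 ≤ i → ¬ ((2 : ℤ) ^ i * (b i : ℤ) ∣ n)
  · exact ⟨pp b n.natAbs, pp_pos hb _, mem_Per_eta_pp hfree⟩
  · push Not at hfree
    obtain ⟨i, hi, hdvd⟩ := hfree
    exact ⟨2 ^ i * b i, Nat.mul_pos (Nat.two_pow_pos i) (hb i hi), mem_Per_eta_of_dvd hi hdvd⟩

theorem eta_isToeplitz (b : ℕ → ℕ)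
    (hodd : ∀ i : ℕ, 1 ≤ i → Odd (b i))
    (hgt : ∀ i : ℕ, 1 ≤ i → 1 < b i)
    (hcop : ∀ i j : ℕ, 1 ≤ i → 1 ≤ j → i ≠ j → Nat.Coprime (b i) (b j)) :
    ∀ n : ℤ, ∃ s : ℕ, 0 < s ∧ n ∈ Per (eta b) s :=
  eta_isToeplitz_general b hgt
end

section
/- For every t ≥ 1, the number p_t = 2^t b_1 b_2 ⋯ b_t is an essential period of η: Per_{p_t}(η) is nonempty, and for every positive integer s < p_t one has Per_s(η) ≠ Per_{p_t}(η). -/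
open scoped BigOperators

/-!
Write `s = 2^a c` with `c` odd. Every multiple of `2^J b_J` with `1 ≤ J ≤ t` is a `p_t`-periodic
zero of `η`, so it suffices to find such a `J` and a `k` with `2^J b_J + k s` `B`-free.
If `a < t`, take `J = t` and `k = b_1 ⋯ b_a`: then `2^J b_J + k s = 2^a U` with `U` odd and
prime to `b_1, …, b_a`. If `a ≥ t`, then `s < p_t` forces `b_J ∤ c` for some `J ≤ t`; take
`k = 2 b_1 ⋯ b_{J-1}`, so that `2^J b_J + k s = 2^J U` with `U` odd and prime to `b_1, …, b_J`.
-/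

open Finset

def IsBFree (b : ℕ → ℕ) (n : ℤ) : Prop :=
  ∀ i : ℕ, 1 ≤ i → ¬ (2 : ℤ) ^ i * b i ∣ n

namespace BFree

variable {b : ℕ → ℕ}

lemma eta_eq_one_of_isBFree {n : ℤ} (h : IsBFree b n) : eta b n = 1 :=
  if_pos h

lemma eta_eq_zero_of_dvd {n : ℤ} {i : ℕ} (hi : 1 ≤ i) (h : (2 : ℤ) ^ i * b i ∣ n) :
    eta b n = 0 :=
  if_neg fun hn => hn i hi h

lemma dvd_pp {J t : ℕ} (hJ : 1 ≤ J) (hJt : J ≤ t) : 2 ^ J * b J ∣ pp b t :=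
  mul_dvd_mul (pow_dvd_pow 2 hJt) (dvd_prod_of_mem b (mem_Icc.mpr ⟨hJ, hJt⟩))

lemma mem_per_pp_of_dvd {n : ℤ} {J t : ℕ} (hJ : 1 ≤ J) (hJt : J ≤ t)
    (hn : (2 : ℤ) ^ J * b J ∣ n) : n ∈ Per (eta b) (pp b t) := by
  intro k
  have hpp : (2 : ℤ) ^ J * b J ∣ pp b t := by exact_mod_cast dvd_pp hJ hJt
  rw [eta_eq_zero_of_dvd hJ (hn.add (hpp.mul_left k)), eta_eq_zero_of_dvd hJ hn]

lemma isCoprime_two_pow (hodd : ∀ i : ℕ, 1 ≤ i → Odd (b i)) {i : ℕ} (hi : 1 ≤ i) (m : ℕ) :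
    IsCoprime (b i : ℤ) (2 ^ m) :=
  (Int.isCoprime_two_right.mpr (hodd i hi).natCast).pow_right

lemma isBFree_two_pow_mul (hodd : ∀ i : ℕ, 1 ≤ i → Odd (b i)) {m : ℕ} {U : ℤ} (hU : Odd U)
    (hb : ∀ i : ℕ, 1 ≤ i → i ≤ m → ¬ (b i : ℤ) ∣ U) : IsBFree b (2 ^ m * U) := by
  intro i hi hdvd
  rcases le_or_gt i m with him | hmi
  · exact hb i hi him ((isCoprime_two_pow hodd hi m).dvd_of_dvd_mul_left
      ((dvd_mul_left _ _).trans hdvd))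
  · have h : (2 : ℤ) ^ m * 2 ∣ 2 ^ m * U :=
      ((pow_succ (2 : ℤ) m ▸ pow_dvd_pow 2 hmi).trans (dvd_mul_right _ _)).trans hdvd
    exact Int.not_even_iff_odd.mpr hU
      (even_iff_two_dvd.mpr ((mul_dvd_mul_iff_left (by positivity)).mp h))

lemma odd_prod (hodd : ∀ i : ℕ, 1 ≤ i → Odd (b i)) {S : Finset ℕ} (hS : ∀ i ∈ S, 1 ≤ i) :
    Odd (∏ i ∈ S, (b i : ℤ)) :=
  prod_induction _ Odd (fun _ _ => Odd.mul) odd_one fun i hi => (hodd i (hS i hi)).natCast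

lemma isCoprime_prod (hcop : ∀ i j : ℕ, 1 ≤ i → 1 ≤ j → i ≠ j → Nat.Coprime (b i) (b j))
    {J : ℕ} {S : Finset ℕ} (hJ : 1 ≤ J) (hS : ∀ i ∈ S, 1 ≤ i) (hJS : J ∉ S) :
    IsCoprime (b J : ℤ) (∏ i ∈ S, (b i : ℤ)) :=
  IsCoprime.prod_right fun i hi =>
    Nat.Coprime.isCoprime (hcop J i hJ (hS i hi) (ne_of_mem_of_not_mem hi hJS).symm)

lemma not_dvd_of_ne (hgt : ∀ i : ℕ, 1 ≤ i → 1 < b i)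
    (hcop : ∀ i j : ℕ, 1 ≤ i → 1 ≤ j → i ≠ j → Nat.Coprime (b i) (b j))
    {i j : ℕ} (hi : 1 ≤ i) (hj : 1 ≤ j) (hij : i ≠ j) : ¬ (b i : ℤ) ∣ b j := by
  rw [Int.natCast_dvd_natCast]
  exact fun h => (hgt i hi).ne' ((hcop i j hi hj hij).eq_one_of_dvd h)

lemma isBFree_add_mul_of_le (hodd : ∀ i : ℕ, 1 ≤ i → Odd (b i))
    (hgt : ∀ i : ℕ, 1 ≤ i → 1 < b i)
    (hcop : ∀ i j : ℕ, 1 ≤ i → 1 ≤ j → i ≠ j → Nat.Coprime (b i) (b j))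
    {J a : ℕ} {c : ℤ} (hJ : 1 ≤ J) (hJa : J ≤ a) (hc : ¬ (b J : ℤ) ∣ c) :
    IsBFree b (2 ^ J * b J + 2 * (∏ i ∈ Ico 1 J, (b i : ℤ)) * (2 ^ a * c)) := by
  set R := ∏ i ∈ Ico 1 J, (b i : ℤ)
  obtain ⟨d, rfl⟩ := Nat.exists_eq_add_of_le hJa
  have hsplit : 2 ^ J * b J + 2 * R * (2 ^ (J + d) * c) = 2 ^ J * (b J + 2 ^ (d + 1) * R * c) := by
    ring
  rw [hsplit]
  refine isBFree_two_pow_mul hodd ((hodd J hJ).natCast.add_even ?_) fun i hi hiJ hdvd => ?_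
  · exact ((even_two.pow_of_ne_zero d.succ_ne_zero).mul_right R).mul_right c
  · rcases hiJ.lt_or_eq with hlt | rfl
    · have hiR : (b i : ℤ) ∣ 2 ^ (d + 1) * R * c :=
        ((dvd_prod_of_mem _ (mem_Ico.mpr ⟨hi, hlt⟩)).mul_left _).mul_right c
      exact not_dvd_of_ne hgt hcop hi hJ hlt.ne ((dvd_add_left hiR).mp hdvd)
    · have hR : IsCoprime (b i : ℤ) (2 ^ (d + 1) * R) :=
        (isCoprime_two_pow hodd hi _).mul_right
          (isCoprime_prod hcop hi (fun j hj => (mem_Ico.mp hj).1) (by simp))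
      exact hc (hR.dvd_of_dvd_mul_left ((dvd_add_right dvd_rfl).mp hdvd))

lemma isBFree_add_mul_of_lt (hodd : ∀ i : ℕ, 1 ≤ i → Odd (b i))
    (hgt : ∀ i : ℕ, 1 ≤ i → 1 < b i)
    (hcop : ∀ i j : ℕ, 1 ≤ i → 1 ≤ j → i ≠ j → Nat.Coprime (b i) (b j))
    {J a : ℕ} {c : ℤ} (hJ : 1 ≤ J) (haJ : a < J) (hc : Odd c) :
    IsBFree b (2 ^ J * b J + (∏ i ∈ Icc 1 a, (b i : ℤ)) * (2 ^ a * c)) := by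
  set Q := ∏ i ∈ Icc 1 a, (b i : ℤ)
  obtain ⟨d, rfl⟩ := Nat.exists_eq_add_of_lt haJ
  have hsplit : 2 ^ (a + d + 1) * b (a + d + 1) + Q * (2 ^ a * c) =
      2 ^ a * (2 ^ (d + 1) * b (a + d + 1) + Q * c) := by
    ring
  rw [hsplit]
  refine isBFree_two_pow_mul hodd (Even.add_odd ?_ ?_) fun i hi hia hdvd => ?_
  · exact (even_two.pow_of_ne_zero d.succ_ne_zero).mul_right _
  · exact (odd_prod hodd fun j hj => (mem_Icc.mp hj).1).mul hc
  · have hiQ : (b i : ℤ) ∣ Q * c := (dvd_prod_of_mem _ (mem_Icc.mpr ⟨hi, hia⟩)).mul_right c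
    exact not_dvd_of_ne hgt hcop hi hJ (by omega)
      ((isCoprime_two_pow hodd hi _).dvd_of_dvd_mul_left ((dvd_add_left hiQ).mp hdvd))

lemma exists_not_dvd_of_lt_pp (hcop : ∀ i j : ℕ, 1 ≤ i → 1 ≤ j → i ≠ j → Nat.Coprime (b i) (b j))
    {t a c : ℕ} (hta : t ≤ a) (hc : 0 < c) (hs : 2 ^ a * c < pp b t) :
    ∃ J, 1 ≤ J ∧ J ≤ t ∧ ¬ b J ∣ c := by
  by_contra! h
  have hprod : ∏ i ∈ Icc 1 t, b i ∣ c := by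
    have : ∏ i ∈ Icc 1 t, (b i : ℤ) ∣ c :=
      prod_dvd_of_coprime (fun i hi j hj hij =>
          Nat.Coprime.isCoprime (hcop i j (mem_Icc.mp hi).1 (mem_Icc.mp hj).1 hij))
        (fun i hi => Int.natCast_dvd_natCast.mpr (h i (mem_Icc.mp hi).1 (mem_Icc.mp hi).2))
    exact_mod_cast this
  have : pp b t ≤ 2 ^ a * c :=
    Nat.mul_le_mul (Nat.pow_le_pow_right two_pos hta) (Nat.le_of_dvd hc hprod)
  omega

lemma exists_isBFree_add_mul (hodd : ∀ i : ℕ, 1 ≤ i → Odd (b i))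
    (hgt : ∀ i : ℕ, 1 ≤ i → 1 < b i)
    (hcop : ∀ i j : ℕ, 1 ≤ i → 1 ≤ j → i ≠ j → Nat.Coprime (b i) (b j))
    {s t : ℕ} (ht : 1 ≤ t) (hs : 0 < s) (hst : s < pp b t) :
    ∃ J, 1 ≤ J ∧ J ≤ t ∧ ∃ k : ℤ, IsBFree b (2 ^ J * b J + k * s) := by
  obtain ⟨a, c, hc, rfl⟩ := Nat.exists_eq_two_pow_mul_odd hs.ne'
  push_cast
  rcases lt_or_ge a t with hat | hta
  · exact ⟨t, ht, le_rfl, _, isBFree_add_mul_of_lt hodd hgt hcop ht hat hc.natCast⟩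
  · obtain ⟨J, hJ, hJt, hJc⟩ := exists_not_dvd_of_lt_pp hcop hta hc.pos hst
    exact ⟨J, hJ, hJt, _,
      isBFree_add_mul_of_le hodd hgt hcop hJ (hJt.trans hta) (by exact_mod_cast hJc)⟩

end BFree

open BFree

theorem pp_essential_period (b : ℕ → ℕ)
    (hodd : ∀ i : ℕ, 1 ≤ i → Odd (b i))
    (hgt : ∀ i : ℕ, 1 ≤ i → 1 < b i)
    (hcop : ∀ i j : ℕ, 1 ≤ i → 1 ≤ j → i ≠ j → Nat.Coprime (b i) (b j))
    (t : ℕ) (ht : 1 ≤ t) :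
    (Per (eta b) (pp b t)).Nonempty ∧
      ∀ s : ℕ, 0 < s → s < pp b t → Per (eta b) s ≠ Per (eta b) (pp b t) := by
  refine ⟨⟨0, mem_per_pp_of_dvd le_rfl ht (dvd_zero _)⟩, fun s hs hst heq => ?_⟩
  obtain ⟨J, hJ, hJt, k, hfree⟩ := exists_isBFree_add_mul hodd hgt hcop ht hs hst
  have hn : (2 : ℤ) ^ J * b J ∈ Per (eta b) s := heq ▸ mem_per_pp_of_dvd hJ hJt dvd_rfl
  have hk := hn k
  rw [eta_eq_one_of_isBFree hfree, eta_eq_zero_of_dvd hJ dvd_rfl] at hk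
  exact one_ne_zero hk
end

section
/- The sequence η is not periodic: there is no positive integer s such that η(n + s) = η(n) for all n ∈ ℤ. -/
open scoped BigOperators

/-!
If `η` had period `s = 2^a c` with `c` odd, it would also have period `B s`, where
`B = b_1 ⋯ b_a`. But `2^(a+1) b_(a+1)` is not `ℬ`-free, while
`2^(a+1) b_(a+1) + B s = 2^a (2 b_(a+1) + B c)` is: the odd factor `2 b_(a+1) + B c` rules out
`i > a`, and for `i ≤ a` it is not divisible by `b_i`, which divides `B` but is coprime to
`2 b_(a+1)`.
-/

section BFree

variable {b : ℕ → ℕ}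

theorem eta_eq_zero_of_dvd {n : ℤ} {i : ℕ} (hi : 1 ≤ i) (h : 2 ^ i * (b i : ℤ) ∣ n) :
    eta b n = 0 := by
  rw [eta, if_neg fun hfree => hfree i hi h]

theorem eta_eq_one_of_forall_not_dvd {n : ℤ} (h : ∀ i, 1 ≤ i → ¬ 2 ^ i * (b i : ℤ) ∣ n) :
    eta b n = 1 := by
  rw [eta, if_pos h]

theorem eta_two_pow_mul_eq_one {a : ℕ} (hodd : ∀ i, 1 ≤ i → i ≤ a → Odd (b i)) {m : ℤ}
    (hm : Odd m) (hbm : ∀ i, 1 ≤ i → i ≤ a → ¬ (b i : ℤ) ∣ m) : eta b (2 ^ a * m) = 1 := by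
  refine eta_eq_one_of_forall_not_dvd fun i hi hdvd => ?_
  rcases le_or_gt i a with hia | hai
  · have hb2 : IsCoprime (b i : ℤ) 2 := by simpa using hodd i hi hia
    exact hbm i hi hia (hb2.pow_right.dvd_of_dvd_mul_left ((dvd_mul_left _ _).trans hdvd))
  · have h2 : 2 ^ a * 2 ∣ 2 ^ a * m := by
      rw [← pow_succ]
      exact (pow_dvd_pow 2 hai).trans ((dvd_mul_right _ _).trans hdvd)
    have hm2 : 2 ∣ m := (mul_dvd_mul_iff_left (by positivity)).1 h2
    exact Int.not_even_iff_odd.2 hm (even_iff_two_dvd.2 hm2)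

end BFree

theorem Int.natCast_not_dvd_two_mul_add {x y : ℕ} {z : ℤ} (hx : Odd x) (hx1 : 1 < x)
    (hxy : x.Coprime y) (hxz : (x : ℤ) ∣ z) : ¬ (x : ℤ) ∣ 2 * y + z := by
  intro h
  have hx2 : (x : ℤ) ∣ 2 * y := (dvd_add_left hxz).1 h
  have hx_two : IsCoprime (x : ℤ) 2 := by simpa using hx
  have hxy' : x ∣ y := Int.natCast_dvd_natCast.1 (hx_two.dvd_of_dvd_mul_left hx2)
  exact hx1.ne' (hxy.eq_one_of_dvd hxy')

theorem eta_not_periodic (b : ℕ → ℕ)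
    (hodd : ∀ i : ℕ, 1 ≤ i → Odd (b i))
    (hgt : ∀ i : ℕ, 1 ≤ i → 1 < b i)
    (hcop : ∀ i j : ℕ, 1 ≤ i → 1 ≤ j → i ≠ j → Nat.Coprime (b i) (b j)) :
    ¬ ∃ s : ℕ, 0 < s ∧ ∀ n : ℤ, eta b (n + s) = eta b n := by
  rintro ⟨s, hs, hper⟩
  obtain ⟨a, c, hc, rfl⟩ := Nat.exists_eq_pow_mul_and_not_dvd hs.ne' 2 (by norm_num)
  set B : ℤ := ∏ i ∈ Finset.Icc 1 a, (b i : ℤ)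
  have hB : Odd B := Int.isCoprime_two_right.1 <| IsCoprime.prod_left fun i hi => by
    simpa using hodd i (Finset.mem_Icc.1 hi).1
  have hodd_m : Odd (2 * (b (a + 1) : ℤ) + B * c) :=
    (even_two_mul _).add_odd (hB.mul ((Int.odd_coe_nat c).2 (Nat.odd_iff.2 (by omega))))
  have hfree : eta b (2 ^ a * (2 * b (a + 1) + B * c)) = 1 :=
    eta_two_pow_mul_eq_one (fun i hi _ => hodd i hi) hodd_m fun i hi hia =>
      Int.natCast_not_dvd_two_mul_add (hodd i hi) (hgt i hi)
        (hcop i (a + 1) hi (by omega) (by omega))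
        ((Finset.dvd_prod_of_mem _ (Finset.mem_Icc.2 ⟨hi, hia⟩)).mul_right _)
  have hnot_free : eta b (2 ^ (a + 1) * b (a + 1)) = 0 := eta_eq_zero_of_dvd (by omega) dvd_rfl
  have hshift := Function.Periodic.int_mul hper B (2 ^ (a + 1) * b (a + 1))
  have hsum : (2 : ℤ) ^ (a + 1) * b (a + 1) + B * ((2 ^ a * c : ℕ) : ℤ)
      = 2 ^ a * (2 * b (a + 1) + B * c) := by push_cast; ring
  rw [Int.cast_id, hsum, hfree, hnot_free] at hshift
  exact one_ne_zero hshift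
end

section
/- Let B ⊆ ℕ \ {1} be primitive. If the indicator function η = 1_{F_B} of the B-free integers is a Toeplitz sequence, then B is taut; that is, there exist no c ∈ ℕ and no Behrend set A ⊆ ℕ \ {1} with c·A ⊆ B. -/
-- The indicator function of the `\mathscr{B}`-free integers for a general `\mathscr{B}`. 
open Classical in
noncomputable def etaN (B : Set ℕ) : ℤ → ℕ := fun n =>
  if (∀ a ∈ B, ¬ ((a : ℤ) ∣ n)) then 1 else 0

-- `A` is a Behrend set: the set of multiples of `A` has natural density `1`. 
open Classical in
def IsBehrend (A : Set ℕ) : Prop :=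
  Filter.Tendsto
    (fun N : ℕ =>
      (((Finset.Icc 1 N).filter (fun n => ∃ a ∈ A, a ∣ n)).card : ℝ) / (N : ℝ))
    Filter.atTop (nhds 1)

/-!
Suppose `c·A ⊆ B` with `A` Behrend. Primitivity makes `c` itself `B`-free, so the Toeplitz
property gives a period `s` with every `c + k s` `B`-free. If some `a ∈ A` divided `1 + j s`, then
`c a ∈ B` would divide `c (1 + j s) = c + (j c) s`; hence the multiples of `A` miss the whole
progression `1 + sℕ`, and their density is at most `1 - 1/s < 1`.
-/

open Filter Finset Topology

theorem etaN_eq_one_iff {B : Set ℕ} {n : ℤ} : etaN B n = 1 ↔ ∀ b ∈ B, ¬ (b : ℤ) ∣ n := by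
  classical
  unfold etaN
  split_ifs with h
  · exact iff_of_true rfl h
  · simpa using h

theorem etaN_natCast_eq_one_of_mul_mem {B : Set ℕ} (hprim : ∀ b ∈ B, ∀ b' ∈ B, b ∣ b' → b = b')
    {c a : ℕ} (hc : 1 ≤ c) (ha : 2 ≤ a) (hca : c * a ∈ B) : etaN B c = 1 := by
  refine etaN_eq_one_iff.2 fun b hb hbc => ?_
  have hbc : b ∣ c := by exact_mod_cast hbc
  have hb_eq : b = c * a := hprim b hb _ hca (hbc.mul_right a)
  have : c * a ≤ c := Nat.le_of_dvd hc (hb_eq ▸ hbc)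
  nlinarith

theorem not_dvd_one_add_mul_of_etaN_eq_one {B A : Set ℕ} {c s : ℕ} (hsub : ∀ a ∈ A, c * a ∈ B)
    (hfree : ∀ k : ℤ, etaN B (c + k * s) = 1) (j : ℕ) : ∀ a ∈ A, ¬ a ∣ 1 + j * s := by
  intro a ha hdvd
  refine etaN_eq_one_iff.1 (hfree (j * c)) _ (hsub a ha) ?_
  have : ((c * a : ℕ) : ℤ) ∣ ((c * (1 + j * s) : ℕ) : ℤ) := by
    exact_mod_cast mul_dvd_mul_left c hdvd
  convert this using 1
  push_cast
  ring

theorem card_filter_Icc_add_div_le {P : ℕ → Prop} [DecidablePred P] {s : ℕ} (hs : 0 < s)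
    (hP : ∀ j, ¬ P (1 + j * s)) (N : ℕ) : #((Icc 1 N).filter P) + N / s ≤ N := by
  have hinj : Function.Injective fun j : ℕ => 1 + j * s := fun j₁ j₂ h =>
    Nat.eq_of_mul_eq_mul_right hs (by simpa using h)
  set T := (range (N / s)).image fun j => 1 + j * s
  have hT : T ⊆ Icc 1 N := by
    simp only [T, image_subset_iff, mem_range, mem_Icc]
    intro j hj
    have : (j + 1) * s ≤ N := (Nat.mul_le_mul_right s hj).trans (Nat.div_mul_le_self N s)
    constructor <;> nlinarith
  have hPT : (Icc 1 N).filter P ⊆ Icc 1 N \ T := by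
    intro n hn
    rw [mem_filter] at hn
    rw [Finset.mem_sdiff, Finset.mem_image]
    exact ⟨hn.1, fun ⟨j, _, hj⟩ => hP j (hj ▸ hn.2)⟩
  have := card_le_card hPT
  rw [card_sdiff_of_subset hT, card_image_of_injective _ hinj, card_range, Nat.card_Icc] at this
  have : N / s ≤ N := Nat.div_le_self N s
  omega

theorem not_tendsto_density_one_of_forall_not {P : ℕ → Prop} [DecidablePred P] {s : ℕ}
    (hs : 0 < s) (hP : ∀ j, ¬ P (1 + j * s)) :
    ¬ Tendsto (fun N : ℕ => (#((Icc 1 N).filter P) : ℝ) / N) atTop (𝓝 1) := by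
  intro hlim
  have hsR : (0 : ℝ) < s := by exact_mod_cast hs
  have hbound : ∀ᶠ N : ℕ in atTop,
      (#((Icc 1 N).filter P) : ℝ) / N ≤ 1 - 1 / (s : ℝ) + 1 / (N : ℝ) := by
    filter_upwards [eventually_ge_atTop 1] with N hN
    have hNpos : (0 : ℝ) < N := by exact_mod_cast hN
    have hcount : (#((Icc 1 N).filter P) : ℝ) + ((N / s : ℕ) : ℝ) ≤ N := by
      exact_mod_cast card_filter_Icc_add_div_le hs hP N
    have hfloor : (N : ℝ) / s < ((N / s : ℕ) : ℝ) + 1 := by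
      rw [← Nat.floor_div_eq_div (K := ℝ)]
      exact Nat.lt_floor_add_one _
    rw [div_le_iff₀ hNpos]
    have : (1 - 1 / (s : ℝ) + 1 / N) * N = N - N / s + 1 := by field_simp
    linarith
  have hlim' : Tendsto (fun N : ℕ => 1 - 1 / (s : ℝ) + 1 / (N : ℝ)) atTop (𝓝 (1 - 1 / s)) := by
    simpa using (tendsto_const_nhds (x := 1 - 1 / (s : ℝ))).add tendsto_one_div_atTop_nhds_zero_nat
  have := le_of_tendsto_of_tendsto hlim hlim' hbound
  have : (0 : ℝ) < 1 / s := by positivity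
  linarith

theorem IsBehrend.nonempty {A : Set ℕ} (hA : IsBehrend A) : A.Nonempty := by
  by_contra hne
  rw [Set.not_nonempty_iff_eq_empty] at hne
  subst hne
  exact zero_ne_one (tendsto_nhds_unique (by simp) hA)

theorem IsBehrend.exists_dvd_one_add_mul {A : Set ℕ} (hA : IsBehrend A) {s : ℕ} (hs : 0 < s) :
    ∃ j, ∃ a ∈ A, a ∣ 1 + j * s := by
  classical
  by_contra! h
  exact not_tendsto_density_one_of_forall_not hs (fun j ⟨a, ha, hdvd⟩ => h j a ha hdvd) hA

theorem toeplitz_implies_taut_general (B : Set ℕ)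
    (hprim : ∀ b ∈ B, ∀ b' ∈ B, b ∣ b' → b = b')
    (htoeplitz : ∀ n : ℤ, ∃ s : ℕ, 0 < s ∧ ∀ k : ℤ, etaN B (n + k * s) = etaN B n) :
    ¬ ∃ (c : ℕ) (A : Set ℕ), 1 ≤ c ∧ (∀ a ∈ A, 2 ≤ a) ∧ IsBehrend A ∧
      (∀ a ∈ A, c * a ∈ B) := by
  rintro ⟨c, A, hc, hA2, hBeh, hsub⟩
  obtain ⟨a₀, ha₀⟩ := hBeh.nonempty
  have hc_free : etaN B c = 1 :=
    etaN_natCast_eq_one_of_mul_mem hprim hc (hA2 a₀ ha₀) (hsub a₀ ha₀)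
  obtain ⟨s, hs, hper⟩ := htoeplitz c
  obtain ⟨j, a, ha, hdvd⟩ := hBeh.exists_dvd_one_add_mul hs
  exact not_dvd_one_add_mul_of_etaN_eq_one hsub (fun k => (hper k).trans hc_free) j a ha hdvd

theorem toeplitz_implies_taut (B : Set ℕ)
    (h2 : ∀ n ∈ B, 2 ≤ n)
    (hprim : ∀ b ∈ B, ∀ b' ∈ B, b ∣ b' → b = b')
    (htoeplitz : ∀ n : ℤ, ∃ s : ℕ, 0 < s ∧ ∀ k : ℤ, etaN B (n + k * s) = etaN B n) :
    ¬ ∃ (c : ℕ) (A : Set ℕ), 1 ≤ c ∧ (∀ a ∈ A, 2 ≤ a) ∧ IsBehrend A ∧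
      (∀ a ∈ A, c * a ∈ B) :=
  toeplitz_implies_taut_general B hprim htoeplitz
end

section
/- Let B ⊆ ℕ \ {1} be primitive and nonempty, η = 1_{F_B}, and X_η the closure of the S-orbit of η in {0,1}^ℤ. The Boolean complement map ¬, defined by (¬y)(n) = 1 − y(n) for all n ∈ ℤ, is an element of the automorphism group of (X_η, S) (equivalently, ¬(X_η) ⊆ X_η) if and only if B = {2}. -/
/-!
If `¬η` lies in `X_η`, every finite window of `¬η` occurs in `η`. If `2 ∉ B`, then `1` and `2` are
`B`-free, so some `1 + n`, `2 + n` are divisible by coprime `c, d ∈ B`; but the window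
`0, c, …, (d - 1) c` of non-free integers would then reappear as free integers `k c + n'`, and as
`c` is invertible modulo `d` one of those is divisible by `d`. Once `2 ∈ B`, primitivity makes
every other `x ∈ B` odd, so `x, x + 1` are two consecutive non-free integers, whose complement
would have to be two consecutive odd integers. Conversely, for `B = {2}` the complement is the
shift by one, which preserves the orbit and hence its closure.
-/

-- The (Boolean) indicator function of the `\mathscr{B}`-free integers for a general
--`\mathscr{B}`. 
open Classical in
noncomputable def etaFB (B : Set ℕ) : ℤ → Bool := fun n =>
  if (∀ a ∈ B, ¬ ((a : ℤ) ∣ n)) then true else false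

-- The orbit closure `X_η` of `η` under the left shift, in the product topology
--on `{0,1}^ℤ`. 
def XetaFB (B : Set ℕ) : Set (ℤ → Bool) :=
  closure {y : ℤ → Bool | ∃ n : ℤ, y = fun m => etaFB B (m + n)}

theorem exists_eqOn_finset_of_mem_closure {ι α : Type*} [TopologicalSpace α] [DiscreteTopology α]
    {s : Set (ι → α)} {y : ι → α} (hy : y ∈ closure s) (W : Finset ι) :
    ∃ z ∈ s, ∀ j ∈ W, z j = y j := by
  have hW : IsOpen ((W : Set ι).pi fun j => {y j}) :=
    isOpen_set_pi W.finite_toSet fun _ _ => isOpen_discrete _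
  obtain ⟨z, hzW, hzs⟩ := mem_closure_iff.mp hy _ hW fun _ _ => rfl
  exact ⟨z, hzs, hzW⟩

theorem Int.exists_mem_Ico_dvd_mul_add_of_isCoprime {c d : ℤ} (hcd : IsCoprime c d) (hd : 0 < d)
    (m : ℤ) : ∃ k ∈ Finset.Ico 0 d, d ∣ k * c + m := by
  obtain ⟨u, v, huv⟩ := hcd
  refine ⟨-m * u % d, Finset.mem_Ico.mpr ⟨Int.emod_nonneg _ hd.ne', Int.emod_lt_of_pos _ hd⟩, ?_⟩
  have hmod : -m * u % d * c + m ≡ -m * u * c + m [ZMOD d] :=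
    ((Int.mod_modEq _ _).mul_right c).add_right m
  have hdvd : d ∣ -m * u * c + m := ⟨m * v, by linear_combination (-m) * huv⟩
  simpa only [sub_sub_cancel] using dvd_sub hdvd hmod.dvd

namespace etaFB

variable {B : Set ℕ}

theorem eq_true_iff {n : ℤ} : etaFB B n = true ↔ ∀ a ∈ B, ¬ (a : ℤ) ∣ n := by
  unfold etaFB
  split <;> simp_all

theorem eq_false_of_dvd {a : ℕ} {n : ℤ} (ha : a ∈ B) (hdvd : (a : ℤ) ∣ n) : etaFB B n = false := by
  by_contra h
  exact eq_true_iff.mp (Bool.not_eq_false _ ▸ h) a ha hdvd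

theorem exists_dvd_of_eq_false {n : ℤ} (h : etaFB B n = false) : ∃ a ∈ B, (a : ℤ) ∣ n := by
  by_contra! hfree
  simp [eq_true_iff.mpr hfree] at h

theorem natCast_eq_true_of_lt {n : ℕ} (hn : 0 < n) (h : ∀ a ∈ B, n < a) : etaFB B n = true :=
  eq_true_iff.mpr fun a ha hdvd =>
    (h a ha).not_ge (Nat.le_of_dvd hn (Int.natCast_dvd_natCast.mp hdvd))

theorem eq_false_or_add_one_eq_false (h2 : 2 ∈ B) (n : ℤ) :
    etaFB B n = false ∨ etaFB B (n + 1) = false := by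
  rcases Int.even_or_odd n with hn | hn
  · exact .inl (eq_false_of_dvd h2 (mod_cast hn.two_dvd))
  · exact .inr (eq_false_of_dvd h2 (mod_cast hn.add_one.two_dvd))

theorem not_singleton_two (n : ℤ) : (! etaFB {2} n) = etaFB {2} (n + 1) := by
  have h (m : ℤ) : etaFB {2} m = ! decide (Even m) := by
    by_cases hm : Even m
    · simpa [hm] using eq_false_of_dvd (Set.mem_singleton 2) (mod_cast hm.two_dvd)
    · simpa [hm] using eq_true_iff.mpr (by simpa [even_iff_two_dvd] using hm)
  simp [h, ← Int.not_even_iff_odd]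

end etaFB

theorem etaFB_mem_XetaFB (B : Set ℕ) : etaFB B ∈ XetaFB B :=
  subset_closure ⟨0, by simp⟩

section Complement

variable {B : Set ℕ}

theorem exists_shift_eq_compl_etaFB (h : (fun n => ! etaFB B n) ∈ XetaFB B) (W : Finset ℤ) :
    ∃ n : ℤ, ∀ j ∈ W, etaFB B (j + n) = ! etaFB B j := by
  obtain ⟨_, ⟨n, rfl⟩, hn⟩ := exists_eqOn_finset_of_mem_closure h W
  exact ⟨n, hn⟩

theorem compl_etaFB_notMem_XetaFB_of_isCoprime {c d : ℕ} (hc : c ∈ B) (hd : d ∈ B) (hd0 : 0 < d)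
    (hcd : IsCoprime (c : ℤ) d) : (fun n => ! etaFB B n) ∉ XetaFB B := by
  intro h
  obtain ⟨n, hn⟩ := exists_shift_eq_compl_etaFB h ((Finset.Ico 0 (d : ℤ)).image (· * (c : ℤ)))
  obtain ⟨k, hk, hdvd⟩ := Int.exists_mem_Ico_dvd_mul_add_of_isCoprime hcd (mod_cast hd0) n
  have hfree := hn (k * c) (Finset.mem_image_of_mem _ hk)
  rw [etaFB.eq_false_of_dvd hc (dvd_mul_left _ _), Bool.not_false, etaFB.eq_true_iff] at hfree
  exact hfree d hd hdvd

theorem two_mem_of_compl_etaFB_mem_XetaFB (h2 : ∀ n ∈ B, 2 ≤ n)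
    (h : (fun n => ! etaFB B n) ∈ XetaFB B) : 2 ∈ B := by
  by_contra h2B
  have hfree₁ : etaFB B 1 = true := mod_cast
    etaFB.natCast_eq_true_of_lt one_pos fun a ha => h2 a ha
  have hfree₂ : etaFB B 2 = true := mod_cast
    etaFB.natCast_eq_true_of_lt two_pos fun a ha => (h2 a ha).lt_of_ne fun h => h2B (h ▸ ha)
  obtain ⟨n, hn⟩ := exists_shift_eq_compl_etaFB h {1, 2}
  have h₁ : etaFB B (1 + n) = false := by simpa [hfree₁] using hn 1 (by simp)
  have h₂ : etaFB B (2 + n) = false := by simpa [hfree₂] using hn 2 (by simp)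
  obtain ⟨c, hc, hc₁⟩ := etaFB.exists_dvd_of_eq_false h₁
  obtain ⟨d, hd, hd₂⟩ := etaFB.exists_dvd_of_eq_false h₂
  have hcd : IsCoprime (c : ℤ) d :=
    (IsCoprime.of_isCoprime_of_dvd_left ⟨-1, 1, by ring⟩ hc₁).of_isCoprime_of_dvd_right hd₂
  exact compl_etaFB_notMem_XetaFB_of_isCoprime hc hd (by linarith [h2 d hd]) hcd h

theorem eq_two_of_compl_etaFB_mem_XetaFB (hprim : ∀ b ∈ B, ∀ b' ∈ B, b ∣ b' → b = b')
    (h2B : 2 ∈ B) (h : (fun n => ! etaFB B n) ∈ XetaFB B) {x : ℕ} (hx : x ∈ B) : x = 2 := by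
  by_contra hx2
  have hodd : Odd (x : ℤ) := Int.not_even_iff_odd.mp fun heven =>
    hx2 (hprim 2 h2B x hx (mod_cast heven.two_dvd)).symm
  have hx₁ : etaFB B (x + 1) = false :=
    etaFB.eq_false_of_dvd h2B (by exact_mod_cast hodd.add_one.two_dvd)
  obtain ⟨n, hn⟩ := exists_shift_eq_compl_etaFB h ({(x : ℤ), (x : ℤ) + 1} : Finset ℤ)
  have h₀ : etaFB B (x + n) = true := by
    simpa [etaFB.eq_false_of_dvd hx dvd_rfl] using hn x (by simp)
  have h₁ : etaFB B (x + n + 1) = true := by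
    simpa [add_right_comm, hx₁] using hn (x + 1) (by simp)
  cases etaFB.eq_false_or_add_one_eq_false h2B (x + n) <;> simp_all

end Complement

theorem mapsTo_compl_XetaFB_two :
    Set.MapsTo (fun (y : ℤ → Bool) n => ! y n) (XetaFB {2}) (XetaFB {2}) := by
  refine Set.MapsTo.closure ?_
    (continuous_pi fun n => (continuous_of_discreteTopology (f := not)).comp (continuous_apply n))
  rintro _ ⟨n, rfl⟩
  exact ⟨n + 1, funext fun m => by simp [etaFB.not_singleton_two, add_assoc]⟩

theorem boolean_complement_automorphism_iff_general (B : Set ℕ)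
    (h2 : ∀ n ∈ B, 2 ≤ n)
    (hprim : ∀ b ∈ B, ∀ b' ∈ B, b ∣ b' → b = b') :
    (∀ y ∈ XetaFB B, (fun n => ! y n) ∈ XetaFB B) ↔ B = {2} := by
  refine ⟨fun h => ?_, fun hB => hB ▸ mapsTo_compl_XetaFB_two⟩
  have hcompl := h _ (etaFB_mem_XetaFB B)
  have h2B := two_mem_of_compl_etaFB_mem_XetaFB h2 hcompl
  exact Set.eq_singleton_iff_unique_mem.mpr
    ⟨h2B, fun _ hx => eq_two_of_compl_etaFB_mem_XetaFB hprim h2B hcompl hx⟩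

theorem boolean_complement_automorphism_iff (B : Set ℕ) (hne : B.Nonempty)
    (h2 : ∀ n ∈ B, 2 ≤ n)
    (hprim : ∀ b ∈ B, ∀ b' ∈ B, b ∣ b' → b = b') :
    (∀ y ∈ XetaFB B, (fun n => ! y n) ∈ XetaFB B) ↔ B = {2} :=
  boolean_complement_automorphism_iff_general B h2 hprim
end
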